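/- Let T be a 𝒞-consistent branching tree, ε > 0, and let x, y, z ∈ ⋂𝒞 be such that z ≻_{ε,T} y and y ⪰_T x. Then z ≻_{ε,T} x. -/

import Mathlib

open Set

/-- Apply a signed index list (index, sign) to a point, giving the vector
`(sign(i₁)·x_{|i₁|}, …, sign(i_k)·x_{|i_k|})` as a list of reals.
`true` encodes a positive sign, `false` a negative sign. -/
def sigApply {n : ℕ} (σ : List (Fin n × Bool)) (x : Fin n → ℝ) : List ℝ :=
  σ.map (fun p => if p.2 then x p.1 else -(x p.1))

/-- Strict ε-lexicographic order `x ≻_ε y` on lists of reals: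
`x ≠ y` and, at the first index where they differ, `x i ≥ y i + ε`. -/
def lexGt (ε : ℝ) : List ℝ → List ℝ → Prop
  | a :: as, b :: bs => (a = b ∧ lexGt ε as bs) ∨ (a ≠ b ∧ b + ε ≤ a)
  | _, _ => False

/-- A branching tree `T = (V, E, B, σ)`: a finite arborescence (encoded by a
parent map from which every node reaches the root), a branching constraint
`B v ⊆ ℝⁿ` for every node with `B r = ℝⁿ`, and a list `σ v` of signed variable
indices with pairwise distinct absolute values for every node. -/
structure BranchingTree (n : ℕ) where
  V : Type
  fin : Fintype V
  root : V
  parent : V → Option V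
  parent_root : parent root = none
  parent_isSome : ∀ v, v ≠ root → (parent v).isSome
  reach_root : ∀ v, Relation.ReflTransGen (fun a b => parent a = some b) v root
  B : V → Set (Fin n → ℝ)
  B_root : B root = Set.univ
  sig : V → List (Fin n × Bool)
  sig_nodup : ∀ v, ((sig v).map Prod.fst).Nodup

namespace BranchingTree

variable {n : ℕ} (T : BranchingTree n)

/-- The set of children `δ⁺(u)` of a node. -/
def children (u : T.V) : Set T.V := {v | T.parent v = some u}

/-- A leaf is a node without children. -/
def IsLeaf (v : T.V) : Prop := T.children v = ∅

/-- The nodes on the root-to-`v` path (the ancestors of `v`, including `v`). -/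
def pathNodes (v : T.V) : Set T.V :=
  {u | Relation.ReflTransGen (fun a b => T.parent a = some b) v u}

/-- `ℬ_v`: the branching constraints attached to the nodes on the root-to-`v` path. -/
def pathCons (v : T.V) : Set (Set (Fin n → ℝ)) := T.B '' T.pathNodes v

/-- Depth of a node: the number of nodes on its root path. -/
noncomputable def depth (v : T.V) : ℕ := (T.pathNodes v).ncard

/-- The feasible region `⋂(𝒞 ∪ ℬ_v)` of node `v`. -/
def region (𝒞 : Set (Set (Fin n → ℝ))) (v : T.V) : Set (Fin n → ℝ) :=
  ⋂₀ (𝒞 ∪ T.pathCons v)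

/-- `T` is `𝒞`-consistent: (T3) the children of any non-leaf cover `⋂𝒞`;
(T5) `σ u` is a prefix of `σ v` for every child `v` of `u`;
(T6) every entry of `σ v (x)` is bounded above over `x ∈ ⋂𝒞`;
(T7) distinct children of `u` have `σ u`-disjoint branching constraints. -/
def Consistent (𝒞 : Set (Set (Fin n → ℝ))) : Prop :=
  (∀ u : T.V, (T.children u).Nonempty → ⋂₀ 𝒞 ⊆ ⋃ v ∈ T.children u, T.B v) ∧
  (∀ u v : T.V, v ∈ T.children u → T.sig u <+: T.sig v) ∧
  (∀ v : T.V, ∀ i : Fin (T.sig v).length,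
    BddAbove ((fun x => if ((T.sig v).get i).2 then x ((T.sig v).get i).1
      else -(x ((T.sig v).get i).1)) '' ⋂₀ 𝒞)) ∧
  (∀ u v w : T.V, v ∈ T.children u → w ∈ T.children u → v ≠ w →
    sigApply (T.sig u) '' T.B v ∩ sigApply (T.sig u) '' T.B w = ∅)

/-- `v` is a deepest common node `dcn(x,y)`: both `x` and `y` lie in the
feasible region of `v`, and `v` is deepest with this property. -/
def IsDCN (𝒞 : Set (Set (Fin n → ℝ))) (v : T.V) (x y : Fin n → ℝ) : Prop :=
  x ∈ T.region 𝒞 v ∧ y ∈ T.region 𝒞 v ∧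
  ∀ w : T.V, x ∈ T.region 𝒞 w → y ∈ T.region 𝒞 w → T.depth w ≤ T.depth v

/-- `x ⪰_T y` : with `v = dcn(x,y)`, `σ v (x) = σ v (y)` or `σ v (x) ≻_ε σ v (y)`. -/
def TreeGe (𝒞 : Set (Set (Fin n → ℝ))) (ε : ℝ) (x y : Fin n → ℝ) : Prop :=
  ∃ v : T.V, T.IsDCN 𝒞 v x y ∧
    (sigApply (T.sig v) x = sigApply (T.sig v) y ∨
      lexGt ε (sigApply (T.sig v) x) (sigApply (T.sig v) y))

/-- `x ≻_{ε,T} y` : with `v = dcn(x,y)`, `σ v (x) ≻_ε σ v (y)`. -/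
def TreeGt (𝒞 : Set (Set (Fin n → ℝ))) (ε : ℝ) (x y : Fin n → ℝ) : Prop :=
  ∃ v : T.V, T.IsDCN 𝒞 v x y ∧
    lexGt ε (sigApply (T.sig v) x) (sigApply (T.sig v) y)

end BranchingTree

/-- A configuration `(𝒞, 𝒟, g, z, T, ε)`. -/
structure Config (n : ℕ) where
  core : Set (Set (Fin n → ℝ))
  derived : Set (Set (Fin n → ℝ))
  g : (Fin n → ℝ) → ℝ
  z : WithTop ℝ
  tree : BranchingTree n
  eps : ℝ

/-- `(F, f)`-validity of a configuration: (V1) the tree is core-consistent and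
`ε > 0`; (V2) if `z < ∞` there is `x ∈ F` with `f x ≤ z`; (V3) for every real
`ẑ < z`, `F` contains a point of `f`-value `≤ ẑ` iff `⋂𝒞` contains a point of
`g`-value `≤ ẑ`; (V4) every `x ∈ ⋂𝒞` with `g x < z` is dominated by some
`y ∈ ⋂(𝒞 ∪ 𝒟)` with `y ⪰_T x` and `g y ≤ g x`. -/
def Config.Valid {n : ℕ} (F : Set (Fin n → ℝ)) (f : (Fin n → ℝ) → ℝ)
    (K : Config n) : Prop :=
  (K.tree.Consistent K.core ∧ 0 < K.eps) ∧
  (K.z < ⊤ → ∃ x ∈ F, (f x : WithTop ℝ) ≤ K.z) ∧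
  (∀ zh : ℝ, (zh : WithTop ℝ) < K.z →
    ((∃ x ∈ F, f x ≤ zh) ↔ ∃ x ∈ ⋂₀ K.core, K.g x ≤ zh)) ∧
  (∀ x ∈ ⋂₀ K.core, (K.g x : WithTop ℝ) < K.z →
    ∃ y ∈ ⋂₀ (K.core ∪ K.derived), K.tree.TreeGe K.core K.eps y x ∧ K.g y ≤ K.g x)

/-- The implication constraint `[𝒜 ⇝ C] = (ℝⁿ \ ⋂𝒜) ∪ C`. -/
def implCon {n : ℕ} (𝒜 : Set (Set (Fin n → ℝ))) (C : Set (Fin n → ℝ)) :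
    Set (Fin n → ℝ) := (⋂₀ 𝒜)ᶜ ∪ C


/-! Let `v = dcn(z, y)` and `u = dcn(y, x)`. Since `y` lies in the regions of both, `u` and `v`
lie on one root path, because (T7) lets a point enter at most one child of each node. If `v` is
an ancestor of `u`, then `x` lies in the region of `v`, and since `σ_v` is a prefix of `σ_u`,
`σ_v(z) ≻_ε σ_v(y) ⪰ σ_v(x)`. Otherwise `u` is a strict ancestor of `v`, so `u` has children,
and `σ_u(y) = σ_u(x)` would put `y` and `x` into the same child of `u` by (T3) and (T7),
contradicting that `u` is deepest; hence `σ_u(z) ⪰ σ_u(y) ≻_ε σ_u(x)`. In both cases `z` and `x`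
share a node `a` with `σ_a(z) ≻_ε σ_a(x)`, and `a` is an ancestor of `dcn(z, x)`. -/

section LexGt

variable {ε : ℝ}

theorem lexGt_trans (hε : 0 ≤ ε) {a b c : List ℝ} (hab : lexGt ε a b) (hbc : lexGt ε b c) :
    lexGt ε a c := by
  induction a generalizing b c with
  | nil => cases b <;> simp [lexGt] at hab
  | cons p as ih =>
    rcases b with _ | ⟨q, bs⟩
    · simp [lexGt] at hab
    rcases c with _ | ⟨r, cs⟩
    · simp [lexGt] at hbc
    simp only [lexGt] at hab hbc ⊢
    rcases hab with ⟨rfl, hab⟩ | ⟨hpq, hab⟩ <;> rcases hbc with ⟨rfl, hbc⟩ | ⟨hqr, hbc⟩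
    · exact Or.inl ⟨rfl, ih hab hbc⟩
    · exact Or.inr ⟨hqr, hbc⟩
    · exact Or.inr ⟨hpq, hab⟩
    · refine Or.inr ⟨fun hpr => hqr ?_, by linarith⟩
      subst hpr
      linarith

theorem lexGt_append {a b : List ℝ} (s t : List ℝ) (h : lexGt ε a b) :
    lexGt ε (a ++ s) (b ++ t) := by
  induction a generalizing b with
  | nil => cases b <;> simp [lexGt] at h
  | cons p as ih =>
    rcases b with _ | ⟨q, bs⟩
    · simp [lexGt] at h
    simp only [List.cons_append, lexGt] at h ⊢
    exact h.imp (And.imp_right ih) id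

theorem eq_or_lexGt_of_lexGt_append {a b s t : List ℝ} (hlen : a.length = b.length)
    (h : lexGt ε (a ++ s) (b ++ t)) : a = b ∨ lexGt ε a b := by
  induction a generalizing b with
  | nil => exact Or.inl (List.length_eq_zero_iff.mp hlen.symm).symm
  | cons p as ih =>
    rcases b with _ | ⟨q, bs⟩
    · simp at hlen
    simp only [List.cons_append, lexGt, List.cons.injEq] at h ⊢
    rcases h with ⟨rfl, h⟩ | h
    · exact (ih (by simpa using hlen) h).imp (And.intro rfl) (fun h => Or.inl ⟨rfl, h⟩)
    · exact Or.inr (Or.inr h)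

variable {n : ℕ} {σ τ : List (Fin n × Bool)} {x y : Fin n → ℝ}

theorem lexGt_sigApply_of_prefix (hστ : σ <+: τ)
    (h : lexGt ε (sigApply σ x) (sigApply σ y)) : lexGt ε (sigApply τ x) (sigApply τ y) := by
  obtain ⟨ρ, rfl⟩ := hστ
  simpa only [sigApply, List.map_append] using lexGt_append _ _ h

theorem eq_or_lexGt_sigApply_of_prefix (hστ : σ <+: τ)
    (h : sigApply τ x = sigApply τ y ∨ lexGt ε (sigApply τ x) (sigApply τ y)) :
    sigApply σ x = sigApply σ y ∨ lexGt ε (sigApply σ x) (sigApply σ y) := by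
  obtain ⟨ρ, rfl⟩ := hστ
  simp only [sigApply, List.map_append] at h
  have hlen : (sigApply σ x).length = (sigApply σ y).length := by simp [sigApply]
  rcases h with h | h
  · exact Or.inl (List.append_inj h hlen).1
  · exact eq_or_lexGt_of_lexGt_append hlen h

end LexGt

namespace BranchingTree

open Relation

variable {n : ℕ} {T : BranchingTree n} {𝒞 : Set (Set (Fin n → ℝ))}

theorem not_transGen_parent_self (v : T.V) :
    ¬ TransGen (fun a b => T.parent a = some b) v v := by
  induction T.reach_root v using ReflTransGen.head_induction_on with
  | refl =>
    intro h
    obtain ⟨b, hb, -⟩ := TransGen.head'_iff.mp h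
    simp [T.parent_root] at hb
  | head hstep _ ih =>
    intro h
    obtain ⟨b, hb, hbv⟩ := TransGen.head'_iff.mp h
    obtain rfl := Option.some_injective _ (hb.symm.trans hstep)
    exact ih (TransGen.tail' hbv hstep)

theorem mem_pathNodes_self (v : T.V) : v ∈ T.pathNodes v := ReflTransGen.refl

theorem pathNodes_subset {u v : T.V} (hu : u ∈ T.pathNodes v) : T.pathNodes u ⊆ T.pathNodes v :=
  fun _ ha => ReflTransGen.trans hu ha

theorem eq_of_mem_pathNodes {u v : T.V} (hu : u ∈ T.pathNodes v) (hv : v ∈ T.pathNodes u) :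
    u = v := by
  rcases ReflTransGen.cases_head hv with rfl | ⟨c, hc, hcv⟩
  · rfl
  · exact (not_transGen_parent_self u (TransGen.head' hc (hcv.trans hu))).elim

theorem exists_mem_children_of_mem_pathNodes {u v : T.V} (hu : u ∈ T.pathNodes v) (hne : u ≠ v) :
    ∃ c ∈ T.children u, c ∈ T.pathNodes v := by
  rcases ReflTransGen.cases_tail hu with rfl | ⟨c, hc, hcu⟩
  · exact (hne rfl).elim
  · exact ⟨c, hcu, hc⟩

theorem depth_lt_depth {u v : T.V} (hu : u ∈ T.pathNodes v) (hne : u ≠ v) :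
    T.depth u < T.depth v := by
  have := T.fin
  refine Set.ncard_lt_ncard ⟨pathNodes_subset hu, fun h => hne ?_⟩ (Set.toFinite _)
  exact eq_of_mem_pathNodes hu (h (mem_pathNodes_self v))

theorem depth_lt_depth_of_mem_children {u c : T.V} (hc : c ∈ T.children u) :
    T.depth u < T.depth c := by
  refine depth_lt_depth (ReflTransGen.single hc) fun h => ?_
  subst h
  exact not_transGen_parent_self u (TransGen.single hc)

theorem mem_region_iff {p : Fin n → ℝ} {v : T.V} :
    p ∈ T.region 𝒞 v ↔ p ∈ ⋂₀ 𝒞 ∧ ∀ a ∈ T.pathNodes v, p ∈ T.B a := by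
  simp only [region, pathCons, sInter_union, mem_inter_iff, sInter_image, mem_iInter,
    mem_sInter]

theorem region_subset_sInter (v : T.V) : T.region 𝒞 v ⊆ ⋂₀ 𝒞 :=
  fun _ hp => (mem_region_iff.mp hp).1

theorem mem_B_of_mem_region {p : Fin n → ℝ} {a v : T.V} (hp : p ∈ T.region 𝒞 v)
    (ha : a ∈ T.pathNodes v) : p ∈ T.B a :=
  (mem_region_iff.mp hp).2 a ha

theorem region_subset_region {u v : T.V} (hu : u ∈ T.pathNodes v) :
    T.region 𝒞 v ⊆ T.region 𝒞 u := fun _ hp =>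
  mem_region_iff.mpr ⟨region_subset_sInter v hp, fun _ ha => mem_B_of_mem_region hp
    (pathNodes_subset hu ha)⟩

theorem mem_region_of_mem_children {p : Fin n → ℝ} {u c : T.V} (hc : c ∈ T.children u)
    (hp : p ∈ T.region 𝒞 u) (hB : p ∈ T.B c) : p ∈ T.region 𝒞 c := by
  refine mem_region_iff.mpr ⟨region_subset_sInter u hp, fun a ha => ?_⟩
  rcases ReflTransGen.cases_head ha with rfl | ⟨b, hb, hba⟩
  · exact hB
  · obtain rfl := Option.some_injective _ (hb.symm.trans hc)
    exact mem_B_of_mem_region hp hba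

theorem Consistent.sig_prefix (hT : T.Consistent 𝒞) {u v : T.V} (hu : u ∈ T.pathNodes v) :
    T.sig u <+: T.sig v := by
  induction hu using ReflTransGen.head_induction_on with
  | refl => exact List.prefix_refl _
  | head hstep _ ih => exact ih.trans (hT.2.1 _ _ hstep)

theorem Consistent.eq_of_sigApply_eq (hT : T.Consistent 𝒞) {u v w : T.V} {p q : Fin n → ℝ}
    (hv : v ∈ T.children u) (hw : w ∈ T.children u) (hp : p ∈ T.B v) (hq : q ∈ T.B w)
    (hpq : sigApply (T.sig u) p = sigApply (T.sig u) q) : v = w := by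
  by_contra hne
  exact (Set.eq_empty_iff_forall_notMem.mp (hT.2.2.2 u v w hv hw hne)) _
    ⟨⟨p, hp, rfl⟩, ⟨q, hq, hpq.symm⟩⟩

theorem Consistent.mem_pathNodes_or_mem_pathNodes (hT : T.Consistent 𝒞) {p : Fin n → ℝ}
    {v w : T.V} (hv : p ∈ T.region 𝒞 v) (hw : p ∈ T.region 𝒞 w) :
    v ∈ T.pathNodes w ∨ w ∈ T.pathNodes v := by
  induction T.reach_root v using ReflTransGen.head_induction_on with
  | refl => exact Or.inl (T.reach_root w)
  | @head v v₀ hstep _ ih =>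
    rcases ih (region_subset_region (ReflTransGen.single hstep) hv) with h | h
    · rcases eq_or_ne v₀ w with rfl | hne
      · exact Or.inr (ReflTransGen.single hstep)
      obtain ⟨c, hc, hcw⟩ := exists_mem_children_of_mem_pathNodes h hne
      obtain rfl := hT.eq_of_sigApply_eq hc hstep (mem_B_of_mem_region hw hcw)
        (mem_B_of_mem_region hv (mem_pathNodes_self v)) rfl
      exact Or.inl hcw
    · exact Or.inr (ReflTransGen.head hstep h)

theorem exists_isDCN {p q : Fin n → ℝ} {a : T.V} (hp : p ∈ T.region 𝒞 a)
    (hq : q ∈ T.region 𝒞 a) : ∃ w, T.IsDCN 𝒞 w p q := by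
  have := T.fin
  obtain ⟨w, hw, hmax⟩ := Set.Finite.exists_maximalFor T.depth
    {w | p ∈ T.region 𝒞 w ∧ q ∈ T.region 𝒞 w} (Set.toFinite _) ⟨a, hp, hq⟩
  exact ⟨w, hw.1, hw.2, fun b hpb hqb => (le_total _ _).elim id (hmax ⟨hpb, hqb⟩)⟩

theorem IsDCN.mem_pathNodes (hT : T.Consistent 𝒞) {p q : Fin n → ℝ} {a w : T.V}
    (hw : T.IsDCN 𝒞 w p q) (hp : p ∈ T.region 𝒞 a) (hq : q ∈ T.region 𝒞 a) :
    a ∈ T.pathNodes w := by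
  rcases hT.mem_pathNodes_or_mem_pathNodes hp hw.1 with haw | hwa
  · exact haw
  rcases eq_or_ne w a with rfl | hne
  · exact hwa
  · exact absurd (hw.2.2 a hp hq) (depth_lt_depth hwa hne).not_ge

theorem IsDCN.sigApply_ne (hT : T.Consistent 𝒞) {p q : Fin n → ℝ} {u : T.V}
    (hu : T.IsDCN 𝒞 u p q) (hc : (T.children u).Nonempty) :
    sigApply (T.sig u) p ≠ sigApply (T.sig u) q := by
  intro hpq
  obtain ⟨cp, hcp, hpB⟩ := mem_iUnion₂.mp (hT.1 u hc (region_subset_sInter u hu.1))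
  obtain ⟨cq, hcq, hqB⟩ := mem_iUnion₂.mp (hT.1 u hc (region_subset_sInter u hu.2.1))
  obtain rfl := hT.eq_of_sigApply_eq hcp hcq hpB hqB hpq
  exact (depth_lt_depth_of_mem_children hcp).not_ge (hu.2.2 cp
    (mem_region_of_mem_children hcp hu.1 hpB) (mem_region_of_mem_children hcp hu.2.1 hqB))

variable {ε : ℝ} {x y z : Fin n → ℝ}

theorem exists_lexGt_of_treeGt_of_treeGe (hT : T.Consistent 𝒞) (hε : 0 ≤ ε)
    (hzy : T.TreeGt 𝒞 ε z y) (hyx : T.TreeGe 𝒞 ε y x) :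
    ∃ a, z ∈ T.region 𝒞 a ∧ x ∈ T.region 𝒞 a ∧
      lexGt ε (sigApply (T.sig a) z) (sigApply (T.sig a) x) := by
  obtain ⟨v, hv, hzy⟩ := hzy
  obtain ⟨u, hu, hyx⟩ := hyx
  by_cases hvu : v ∈ T.pathNodes u
  · refine ⟨v, hv.1, region_subset_region hvu hu.2.1, ?_⟩
    rcases eq_or_lexGt_sigApply_of_prefix (hT.sig_prefix hvu) hyx with h | h
    · exact h ▸ hzy
    · exact lexGt_trans hε hzy h
  · have huv : u ∈ T.pathNodes v :=
      (hT.mem_pathNodes_or_mem_pathNodes hu.1 hv.2.1).resolve_right hvu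
    have hne : u ≠ v := fun h => hvu (h ▸ mem_pathNodes_self u)
    obtain ⟨c, hc, -⟩ := exists_mem_children_of_mem_pathNodes huv hne
    have hyx : lexGt ε (sigApply (T.sig u) y) (sigApply (T.sig u) x) :=
      hyx.resolve_left (hu.sigApply_ne hT ⟨c, hc⟩)
    refine ⟨u, region_subset_region huv hv.1, hu.2.1, ?_⟩
    rcases eq_or_lexGt_sigApply_of_prefix (hT.sig_prefix huv) (Or.inr hzy) with h | h
    · exact h ▸ hyx
    · exact lexGt_trans hε h hyx

end BranchingTree

theorem treeGt_of_treeGt_treeGe_general {n : ℕ} (𝒞 : Set (Set (Fin n → ℝ)))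
    (T : BranchingTree n) (ε : ℝ) (hT : T.Consistent 𝒞) (hε : 0 < ε)
    (x y z : Fin n → ℝ)
    (hzy : T.TreeGt 𝒞 ε z y) (hyx : T.TreeGe 𝒞 ε y x) :
    T.TreeGt 𝒞 ε z x := by
  obtain ⟨a, hza, hxa, hlex⟩ :=
    BranchingTree.exists_lexGt_of_treeGt_of_treeGe hT hε.le hzy hyx
  obtain ⟨w, hw⟩ := BranchingTree.exists_isDCN hza hxa
  have haw : a ∈ T.pathNodes w := hw.mem_pathNodes hT hza hxa
  exact ⟨w, hw, lexGt_sigApply_of_prefix (hT.sig_prefix haw) hlex⟩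

/-- for a `𝒞`-consistent branching tree `T`, `ε > 0`, and
`x, y, z ∈ ⋂𝒞` with `z ≻_{ε,T} y` and `y ⪰_T x`, we have `z ≻_{ε,T} x`. -/
theorem treeGt_of_treeGt_treeGe {n : ℕ} (𝒞 : Set (Set (Fin n → ℝ)))
    (T : BranchingTree n) (ε : ℝ) (hT : T.Consistent 𝒞) (hε : 0 < ε)
    (x y z : Fin n → ℝ) (hx : x ∈ ⋂₀ 𝒞) (hy : y ∈ ⋂₀ 𝒞) (hz : z ∈ ⋂₀ 𝒞)
    (hzy : T.TreeGt 𝒞 ε z y) (hyx : T.TreeGe 𝒞 ε y x) :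
    T.TreeGt 𝒞 ε z x :=
  treeGt_of_treeGt_treeGe_general 𝒞 T ε hT hε x y z hzy hyx
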